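/- Monotonicity and non-negativity of the iteration (equations (3.6)–(3.7) of the proof of Theorem 3.1). Define v₀(x,t) := ξ − β and v_{m+1}(x,t) := ∫₀ᵗ ∫_X K(x,y;t−s) h(y,s) G(v_m(y,s) + g(y,s)) dμ(y) ds. Then every v_m is measurable on X×(0,∞), v_m(x,t) ≥ 0 for all m ∈ ℕ∪{0} and a.e. (x,t), and the sequence is nonincreasing in m: v_{m+1}(x,t) ≤ v_m(x,t) for all m ∈ ℕ∪{0}, a.e. x ∈ X and a.e. t > 0. -/

import Mathlib

/-!
The iteration map `w ↦ ∫₀ᵗ ∫ K(x,y;t-s) h(y,s) G(w(y,s) + g(y,s)) dμ(y) ds` preserves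
nonnegativity and the a.e. order of nonnegative functions, since `K, h ≥ 0` and `G` is
nondecreasing on `[0, ∞)`. Because `K` is stochastic, `h ≤ p₂` and `∫₀^∞ p₂ = 1`, it maps every
`w` with `w + g ≤ ξ` a.e. to a function bounded by `G ξ = ξ - β`; as `g ≤ β = ‖g‖_∞` a.e., this
applies to every `w ≤ ξ - β`. Starting from `v₀ = ξ - β`, induction on `m` gives `v_{m+1} ≤ v_m ≤ ξ - β`.
-/

open MeasureTheory Set Filter

section General

variable {α β : Type*} [MeasurableSpace α] [MeasurableSpace β] {μ : Measure α} {ν : Measure β}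

theorem MeasureTheory.MemLp.ae_norm_le_toReal_eLpNorm_top {E : Type*} [NormedAddCommGroup E]
    {f : α → E} (hf : MemLp f ⊤ μ) : ∀ᵐ x ∂μ, ‖f x‖ ≤ (eLpNorm f ⊤ μ).toReal := by
  have hfin : eLpNormEssSup f μ ≠ ⊤ := by simpa only [eLpNorm_exponent_top] using hf.2.ne
  filter_upwards [ae_le_eLpNormEssSup (f := f) (μ := μ)] with x hx
  simpa only [eLpNorm_exponent_top, toReal_enorm] using ENNReal.toReal_mono hfin hx

theorem ae_ae_swap_of_ae_prod [SFinite μ] [SFinite ν] {p : α × β → Prop}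
    (h : ∀ᵐ z ∂μ.prod ν, p z) : ∀ᵐ y ∂ν, ∀ᵐ x ∂μ, p (x, y) :=
  Measure.ae_ae_of_ae_prod (Measure.measurePreserving_swap.quasiMeasurePreserving.ae h)

theorem ae_ae_comm_le_of_aemeasurable [SFinite μ] [SFinite ν] {f : α → β → ℝ}
    (hf : Measurable (Function.uncurry f)) {p : β → ℝ} (hp : AEMeasurable p ν)
    (h : ∀ᵐ x ∂μ, ∀ᵐ y ∂ν, f x y ≤ p y) : ∀ᵐ y ∂ν, ∀ᵐ x ∂μ, f x y ≤ p y := by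
  have hmk : ∀ᵐ y ∂ν, p y = hp.mk p y := hp.ae_eq_mk
  have hset : MeasurableSet {z : α × β | f z.1 z.2 ≤ hp.mk p z.2} :=
    measurableSet_le hf (hp.measurable_mk.comp measurable_snd)
  have h_mk : ∀ᵐ x ∂μ, ∀ᵐ y ∂ν, f x y ≤ hp.mk p y :=
    h.mono fun x hx => (hx.and hmk).mono fun y hy => hy.2 ▸ hy.1
  filter_upwards [(Measure.ae_ae_comm hset).1 h_mk, hmk] with y hy hpy
  simpa only [hpy] using hy

theorem measurable_comp_of_monotoneOn_Ici {G : ℝ → ℝ} (hG : MonotoneOn G (Ici 0)) {f : α → ℝ}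
    (hf : Measurable f) (hf0 : ∀ a, 0 ≤ f a) : Measurable fun a => G (f a) := by
  have hG' : Monotone fun u => G (max u 0) := fun u v huv =>
    hG (le_max_right u 0) (le_max_right v 0) (max_le_max huv le_rfl)
  convert hG'.measurable.comp hf using 2 with a
  simp only [Function.comp_apply, max_eq_left (hf0 a)]

theorem measurable_setIntegral_Ioc {φ : α → ℝ → ℝ} (hφ : Measurable (Function.uncurry φ))
    {a b : α → ℝ} (ha : Measurable a) (hb : Measurable b) :
    Measurable fun z => ∫ s in Ioc (a z) (b z), φ z s := by
  have hset : MeasurableSet {p : α × ℝ | p.2 ∈ Ioc (a p.1) (b p.1)} :=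
    (measurableSet_lt (ha.comp measurable_fst) measurable_snd).inter
      (measurableSet_le measurable_snd (hb.comp measurable_fst))
  have hind :=
    ((hφ.indicator hset).stronglyMeasurable.integral_prod_right' (ν := volume)).measurable
  convert hind using 2 with z
  rw [← integral_indicator measurableSet_Ioc]
  rfl

theorem ae_restrict_Iio_sub_of_ae_restrict_Ioi {Q : ℝ → Prop}
    (h : ∀ᵐ τ ∂volume.restrict (Ioi 0), Q τ) (t : ℝ) :
    ∀ᵐ s ∂volume.restrict (Iio t), Q (t - s) := by
  have hpos : ∀ᵐ s, 0 < t - s → Q (t - s) :=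
    (Measure.measurePreserving_sub_left volume t).quasiMeasurePreserving.ae
      ((ae_restrict_iff' measurableSet_Ioi).1 h)
  rw [ae_restrict_iff' measurableSet_Iio]
  filter_upwards [hpos] with s hs hst using hs (sub_pos.2 hst)

theorem integral_mono_of_nonneg_of_le_integrable {f₁ f₂ b : α → ℝ} (h₀ : 0 ≤ᵐ[μ] f₁)
    (h : ∀ᵐ x ∂μ, f₁ x ≤ f₂ x ∧ f₂ x ≤ b x) (hf₂ : AEStronglyMeasurable f₂ μ)
    (hb : Integrable b μ) : ∫ x, f₁ x ∂μ ≤ ∫ x, f₂ x ∂μ ∧ ∫ x, f₂ x ∂μ ≤ ∫ x, b x ∂μ := by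
  have h₂0 : 0 ≤ᵐ[μ] f₂ := by filter_upwards [h₀, h] with x hx hx' using hx.trans hx'.1
  have hf₂_int : Integrable f₂ μ := hb.mono' hf₂ <| by
    filter_upwards [h₂0, h] with x hx hx' using (Real.norm_of_nonneg hx).trans_le hx'.2
  exact ⟨integral_mono_of_nonneg h₀ hf₂_int (h.mono fun _ hx => hx.1),
    integral_mono_of_nonneg h₂0 hb (h.mono fun _ hx => hx.2)⟩

theorem integral_mul_le_of_integral_eq_one {k f₁ f₂ : α → ℝ} {c : ℝ} (hk0 : ∀ x, 0 ≤ k x)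
    (hk : ∫ x, k x ∂μ = 1) (hf₁0 : ∀ x, 0 ≤ f₁ x) (hf₂ : AEStronglyMeasurable f₂ μ)
    (h : ∀ᵐ x ∂μ, f₁ x ≤ f₂ x ∧ f₂ x ≤ c) :
    ∫ x, k x * f₁ x ∂μ ≤ ∫ x, k x * f₂ x ∂μ ∧ ∫ x, k x * f₂ x ∂μ ≤ c := by
  have hk_int : Integrable k μ := Integrable.of_integral_ne_zero (by simp [hk])
  have hmono := integral_mono_of_nonneg_of_le_integrable (b := fun x => k x * c)
    (Eventually.of_forall fun x => mul_nonneg (hk0 x) (hf₁0 x))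
    (h.mono fun x hx => ⟨mul_le_mul_of_nonneg_left hx.1 (hk0 x),
      mul_le_mul_of_nonneg_left hx.2 (hk0 x)⟩)
    (hk_int.aestronglyMeasurable.mul hf₂) (hk_int.mul_const c)
  rwa [integral_mul_const, hk, one_mul] at hmono

theorem mul_apply_le_of_monotoneOn_Ici {G : ℝ → ℝ} (hG : MonotoneOn G (Ici 0))
    (hG0 : ∀ u, 0 ≤ u → 0 ≤ G u) {a b c r r' : ℝ} (ha : 0 ≤ a) (hab : a ≤ b) (hbc : b ≤ c)
    (hr : 0 ≤ r) (hrr' : r ≤ r') : r * G a ≤ r * G b ∧ r * G b ≤ r' * G c := by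
  have hb : 0 ≤ b := ha.trans hab
  have hc : 0 ≤ c := hb.trans hbc
  exact ⟨mul_le_mul_of_nonneg_left (hG ha hb hab) hr,
    mul_le_mul hrr' (hG hb hc hbc) (hG0 b hb) (hr.trans hrr')⟩

end General

section Duhamel

variable {X : Type*} [MeasurableSpace X] {μ : Measure X} {K : X → X → ℝ → ℝ}
  {F F₁ F₂ : X → ℝ → ℝ}

noncomputable def duhamel (μ : Measure X) (K : X → X → ℝ → ℝ) (F : X → ℝ → ℝ) (x : X) (t : ℝ) : ℝ :=
  ∫ s in Ioc 0 t, ∫ y, K x y (t - s) * F y s ∂μ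

theorem measurable_integral_kernel_mul [SFinite μ]
    (hK : Measurable fun q : X × X × ℝ => K q.1 q.2.1 q.2.2)
    (hF : Measurable fun q : X × ℝ => F q.1 q.2) :
    Measurable fun p : (X × ℝ) × ℝ => ∫ y, K p.1.1 y (p.1.2 - p.2) * F y p.2 ∂μ := by
  have h : Measurable fun p : ((X × ℝ) × ℝ) × X => K p.1.1.1 p.2 (p.1.1.2 - p.1.2) * F p.2 p.1.2 :=
    (hK.comp (by fun_prop : Measurable fun p : ((X × ℝ) × ℝ) × X =>
      (p.1.1.1, p.2, p.1.1.2 - p.1.2))).mul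
      (hF.comp (by fun_prop : Measurable fun p : ((X × ℝ) × ℝ) × X => (p.2, p.1.2)))
  exact h.stronglyMeasurable.integral_prod_right'.measurable

theorem measurable_duhamel [SFinite μ]
    (hK : Measurable fun q : X × X × ℝ => K q.1 q.2.1 q.2.2)
    (hF : Measurable fun q : X × ℝ => F q.1 q.2) :
    Measurable fun q : X × ℝ => duhamel μ K F q.1 q.2 :=
  measurable_setIntegral_Ioc (measurable_integral_kernel_mul hK hF) measurable_const measurable_snd

theorem duhamel_nonneg (hK0 : ∀ x y τ, 0 ≤ K x y τ) (hF0 : ∀ y s, 0 ≤ F y s)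
    (x : X) (t : ℝ) : 0 ≤ duhamel μ K F x t :=
  integral_nonneg fun _ => integral_nonneg fun _ => mul_nonneg (hK0 _ _ _) (hF0 _ _)

theorem ae_duhamel_mono_le [SigmaFinite μ] {b : ℝ → ℝ}
    (hK : Measurable fun q : X × X × ℝ => K q.1 q.2.1 q.2.2) (hK0 : ∀ x y τ, 0 ≤ K x y τ)
    (hK_stoch : ∀ᵐ x ∂μ, ∀ᵐ τ ∂volume.restrict (Ioi 0), ∫ y, K x y τ ∂μ = 1)
    (hF₁0 : ∀ y s, 0 ≤ F₁ y s) (hF₂ : Measurable fun q : X × ℝ => F₂ q.1 q.2)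
    (hb : IntegrableOn b (Ioi 0)) (hb0 : ∀ᵐ s ∂volume.restrict (Ioi 0), 0 ≤ b s)
    (hF : ∀ᵐ s ∂volume.restrict (Ioi 0), ∀ᵐ y ∂μ, F₁ y s ≤ F₂ y s ∧ F₂ y s ≤ b s) :
    ∀ᵐ q ∂μ.prod (volume.restrict (Ioi 0)),
      duhamel μ K F₁ q.1 q.2 ≤ duhamel μ K F₂ q.1 q.2 ∧
        duhamel μ K F₂ q.1 q.2 ≤ ∫ s in Ioi 0, b s := by
  filter_upwards [Measure.quasiMeasurePreserving_fst.ae hK_stoch] with ⟨x, t⟩ hx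
  have hsub : Ioo 0 t ⊆ Ioi 0 := Ioo_subset_Ioi_self
  have hinner : ∀ᵐ s ∂volume.restrict (Ioo 0 t),
      ∫ y, K x y (t - s) * F₁ y s ∂μ ≤ ∫ y, K x y (t - s) * F₂ y s ∂μ ∧
        ∫ y, K x y (t - s) * F₂ y s ∂μ ≤ b s := by
    filter_upwards [ae_restrict_of_ae_restrict_of_subset hsub hF,
      ae_restrict_of_ae_restrict_of_subset Ioo_subset_Iio_self
        (ae_restrict_Iio_sub_of_ae_restrict_Ioi hx t)] with s hFs hKs
    exact integral_mul_le_of_integral_eq_one (hK0 x · _) hKs (hF₁0 · s)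
      (hF₂.comp (by fun_prop : Measurable fun y : X => (y, s))).aestronglyMeasurable hFs
  have houter := integral_mono_of_nonneg_of_le_integrable
    (Eventually.of_forall fun s => integral_nonneg fun y => mul_nonneg (hK0 x y _) (hF₁0 y s))
    hinner ((measurable_integral_kernel_mul hK hF₂).comp
      (by fun_prop : Measurable fun s : ℝ => ((x, t), s))).aestronglyMeasurable (hb.mono_set hsub)
  simp only [duhamel, integral_Ioc_eq_integral_Ioo]
  exact ⟨houter.1, houter.2.trans (setIntegral_mono_set hb hb0 hsub.eventuallyLE)⟩

end Duhamel

section Iteration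

variable {X : Type*} [MeasurableSpace X] {μ : Measure X} {K : X → X → ℝ → ℝ}
  {g h w : X → ℝ → ℝ} {G : ℝ → ℝ}

theorem measurable_mul_apply_add
    (hg : Measurable fun q : X × ℝ => g q.1 q.2) (hg0 : ∀ y s, 0 ≤ g y s)
    (hh : Measurable fun q : X × ℝ => h q.1 q.2) (hG : MonotoneOn G (Ici 0))
    (hw : Measurable fun q : X × ℝ => w q.1 q.2) (hw0 : ∀ y s, 0 ≤ w y s) :
    Measurable fun q : X × ℝ => h q.1 q.2 * G (w q.1 q.2 + g q.1 q.2) :=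
  hh.mul <| measurable_comp_of_monotoneOn_Ici hG (hw.add hg)
    fun q => add_nonneg (hw0 q.1 q.2) (hg0 q.1 q.2)

noncomputable def iterationMap (μ : Measure X) (K : X → X → ℝ → ℝ) (g h : X → ℝ → ℝ)
    (G : ℝ → ℝ) (w : X → ℝ → ℝ) : X → ℝ → ℝ :=
  duhamel μ K (fun y s => h y s * G (w y s + g y s))

theorem measurable_iterationMap [SFinite μ]
    (hK : Measurable fun q : X × X × ℝ => K q.1 q.2.1 q.2.2)
    (hg : Measurable fun q : X × ℝ => g q.1 q.2) (hg0 : ∀ y s, 0 ≤ g y s)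
    (hh : Measurable fun q : X × ℝ => h q.1 q.2) (hG : MonotoneOn G (Ici 0))
    (hw : Measurable fun q : X × ℝ => w q.1 q.2) (hw0 : ∀ y s, 0 ≤ w y s) :
    Measurable fun q : X × ℝ => iterationMap μ K g h G w q.1 q.2 :=
  measurable_duhamel hK (measurable_mul_apply_add hg hg0 hh hG hw hw0)

theorem iterationMap_nonneg (hK0 : ∀ x y τ, 0 ≤ K x y τ) (hg0 : ∀ y s, 0 ≤ g y s)
    (hh0 : ∀ y s, 0 ≤ h y s) (hG0 : ∀ u, 0 ≤ u → 0 ≤ G u) (hw0 : ∀ y s, 0 ≤ w y s)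
    (x : X) (t : ℝ) : 0 ≤ iterationMap μ K g h G w x t :=
  duhamel_nonneg hK0 (fun y s => mul_nonneg (hh0 y s) (hG0 _ (add_nonneg (hw0 y s) (hg0 y s))))
    x t

theorem ae_iterationMap_mono_le [SigmaFinite μ] {u : X → ℝ → ℝ} {p : ℝ → ℝ} {c : ℝ}
    (hK : Measurable fun q : X × X × ℝ => K q.1 q.2.1 q.2.2) (hK0 : ∀ x y τ, 0 ≤ K x y τ)
    (hK_stoch : ∀ᵐ x ∂μ, ∀ᵐ τ ∂volume.restrict (Ioi 0), ∫ y, K x y τ ∂μ = 1)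
    (hg : Measurable fun q : X × ℝ => g q.1 q.2) (hg0 : ∀ y s, 0 ≤ g y s)
    (hh : Measurable fun q : X × ℝ => h q.1 q.2) (hh0 : ∀ y s, 0 ≤ h y s)
    (hG : MonotoneOn G (Ici 0)) (hG0 : ∀ u, 0 ≤ u → 0 ≤ G u)
    (hp : IntegrableOn p (Ioi 0)) (hp0 : ∀ᵐ s ∂volume.restrict (Ioi 0), 0 ≤ p s)
    (hhp : ∀ᵐ s ∂volume.restrict (Ioi 0), ∀ᵐ y ∂μ, h y s ≤ p s) (hc : 0 ≤ c)
    (hu0 : ∀ y s, 0 ≤ u y s) (hw : Measurable fun q : X × ℝ => w q.1 q.2)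
    (hw0 : ∀ y s, 0 ≤ w y s)
    (huw : ∀ᵐ q ∂μ.prod (volume.restrict (Ioi 0)),
      u q.1 q.2 ≤ w q.1 q.2 ∧ w q.1 q.2 + g q.1 q.2 ≤ c) :
    ∀ᵐ q ∂μ.prod (volume.restrict (Ioi 0)),
      iterationMap μ K g h G u q.1 q.2 ≤ iterationMap μ K g h G w q.1 q.2 ∧
        iterationMap μ K g h G w q.1 q.2 ≤ (∫ s in Ioi 0, p s) * G c := by
  have hsource : ∀ᵐ s ∂volume.restrict (Ioi 0), ∀ᵐ y ∂μ,
      h y s * G (u y s + g y s) ≤ h y s * G (w y s + g y s) ∧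
        h y s * G (w y s + g y s) ≤ p s * G c := by
    filter_upwards [ae_ae_swap_of_ae_prod huw, hhp] with s hs hps
    filter_upwards [hs, hps] with y hy hpy
    exact mul_apply_le_of_monotoneOn_Ici hG hG0 (add_nonneg (hu0 y s) (hg0 y s))
      (by linarith [hy.1]) hy.2 (hh0 y s) hpy
  rw [← integral_mul_const]
  exact ae_duhamel_mono_le hK hK0 hK_stoch
    (fun y s => mul_nonneg (hh0 y s) (hG0 _ (add_nonneg (hu0 y s) (hg0 y s))))
    (measurable_mul_apply_add hg hg0 hh hG hw hw0)
    (hp.mul_const _) (hp0.mono fun s hs => mul_nonneg hs (hG0 c hc)) hsource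

end Iteration

theorem iteration_monotone_stochastic_general
    {X : Type*} [MeasurableSpace X] (μ : Measure X) [SigmaFinite μ]
    (K : X → X → ℝ → ℝ) (g h : X → ℝ → ℝ) (G : ℝ → ℝ)
    (p₁ p₂ : ℝ → ℝ) (β ξ : ℝ)
    (hK_meas : Measurable fun q : X × X × ℝ => K q.1 q.2.1 q.2.2)
    (hK_nonneg : ∀ x y t, 0 ≤ K x y t)
    (hK_stoch : ∀ᵐ x ∂μ, ∀ᵐ t ∂(volume.restrict (Ioi (0:ℝ))),
      (∫ y, K x y t ∂μ) = 1)
    (hg_meas : Measurable fun q : X × ℝ => g q.1 q.2)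
    (hg_nonneg : ∀ x t, 0 ≤ g x t)
    (hg_bdd : MemLp (fun q : X × ℝ => g q.1 q.2) ⊤
      (μ.prod (volume.restrict (Ioi (0:ℝ)))))
    (hβ : β = (eLpNorm (fun q : X × ℝ => g q.1 q.2) ⊤
      (μ.prod (volume.restrict (Ioi (0:ℝ))))).toReal)
    (hh_meas : Measurable fun q : X × ℝ => h q.1 q.2)
    (hh_nonneg : ∀ x t, 0 ≤ h x t)
    (hG_nonneg : ∀ u, 0 ≤ u → 0 ≤ G u)
    (hG_mono : StrictMonoOn G (Ici 0))
    (hp₂_pos : ∀ t ∈ Ioi (0:ℝ), 0 < p₂ t)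
    (hp₂_int : (∫ t in Ioi (0:ℝ), p₂ t) = 1)
    (hp_bound : ∀ᵐ x ∂μ, ∀ᵐ t ∂(volume.restrict (Ioi (0:ℝ))),
      p₁ t ≤ h x t ∧ h x t ≤ p₂ t)
    (hξ_pos : 0 < ξ) (hξ_eq : ξ - G ξ = β)
    (V : ℕ → X → ℝ → ℝ)
    (hV0 : ∀ x t, V 0 x t = ξ - β)
    (hVsucc : ∀ m x t, V (m + 1) x t =
      ∫ s in Ioc (0:ℝ) t, ∫ y, K x y (t - s) * (h y s * G (V m y s + g y s)) ∂μ) :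
    (∀ m, Measurable fun q : X × ℝ => V m q.1 q.2) ∧
    (∀ m, ∀ᵐ q ∂(μ.prod (volume.restrict (Ioi (0:ℝ)))), 0 ≤ V m q.1 q.2) ∧
    (∀ m, ∀ᵐ q ∂(μ.prod (volume.restrict (Ioi (0:ℝ)))),
      V (m + 1) q.1 q.2 ≤ V m q.1 q.2) := by
  have hV : ∀ m, V (m + 1) = iterationMap μ K g h G (V m) := fun m => funext₂ (hVsucc m)
  have hG : MonotoneOn G (Ici 0) := hG_mono.monotoneOn
  have hξβ : ξ - β = G ξ := by rw [← hξ_eq, sub_sub_cancel]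
  have hV_nonneg : ∀ m x t, 0 ≤ V m x t := by
    intro m
    induction m with
    | zero => intro x t; rw [hV0, hξβ]; exact hG_nonneg ξ hξ_pos.le
    | succ m ih =>
      rw [hV]; exact iterationMap_nonneg hK_nonneg hg_nonneg hh_nonneg hG_nonneg ih
  have hV_meas : ∀ m, Measurable fun q : X × ℝ => V m q.1 q.2 := by
    intro m
    induction m with
    | zero => simp only [hV0]; exact measurable_const
    | succ m ih =>
      rw [hV]
      exact measurable_iterationMap hK_meas hg_meas hg_nonneg hh_meas hG ih (hV_nonneg m)
  have hg_le : ∀ᵐ q ∂(μ.prod (volume.restrict (Ioi 0))), g q.1 q.2 ≤ β := by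
    filter_upwards [hg_bdd.ae_norm_le_toReal_eLpNorm_top] with q hq
    rw [hβ]; exact (Real.le_norm_self _).trans hq
  have hp₂ : IntegrableOn p₂ (Ioi 0) := Integrable.of_integral_ne_zero (by simp [hp₂_int])
  have hhp : ∀ᵐ s ∂volume.restrict (Ioi 0), ∀ᵐ y ∂μ, h y s ≤ p₂ s :=
    ae_ae_comm_le_of_aemeasurable hh_meas hp₂.aemeasurable
      (hp_bound.mono fun _ hx => hx.mono fun _ ht => ht.2)
  have hstep : ∀ m n, (∀ᵐ q ∂(μ.prod (volume.restrict (Ioi 0))),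
      V m q.1 q.2 ≤ V n q.1 q.2 ∧ V n q.1 q.2 + g q.1 q.2 ≤ ξ) →
      ∀ᵐ q ∂(μ.prod (volume.restrict (Ioi 0))),
        V (m + 1) q.1 q.2 ≤ V (n + 1) q.1 q.2 ∧ V (n + 1) q.1 q.2 ≤ ξ - β := by
    intro m n hmn
    have hp₂0 : ∀ᵐ s ∂volume.restrict (Ioi 0), 0 ≤ p₂ s :=
      (ae_restrict_iff' measurableSet_Ioi).2 (.of_forall fun s hs => (hp₂_pos s hs).le)
    simpa only [hV, hp₂_int, one_mul, hξβ] using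
      ae_iterationMap_mono_le hK_meas hK_nonneg hK_stoch hg_meas hg_nonneg hh_meas hh_nonneg hG
        hG_nonneg hp₂ hp₂0 hhp hξ_pos.le (hV_nonneg m) (hV_meas n) (hV_nonneg n) hmn
  have hmono : ∀ m, ∀ᵐ q ∂(μ.prod (volume.restrict (Ioi 0))),
      V (m + 1) q.1 q.2 ≤ V m q.1 q.2 ∧ V m q.1 q.2 ≤ ξ - β := by
    intro m
    induction m with
    | zero =>
      filter_upwards [hstep 0 0 (hg_le.mono fun q hq => ⟨le_rfl, by linarith [hV0 q.1 q.2]⟩)]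
        with q hq
      simpa only [hV0, le_refl, and_true] using hq.2
    | succ m ih =>
      exact hstep (m + 1) m <| by
        filter_upwards [ih, hg_le] with q hq hgq using ⟨hq.1, by linarith [hq.2]⟩
  exact ⟨hV_meas, fun m => .of_forall fun q => hV_nonneg m q.1 q.2,
    fun m => (hmono m).mono fun _ hq => hq.1⟩

/-- **Monotonicity and non-negativity of the iteration (eqs. (3.6)–(3.7),
proof of Theorem 3.1).** With `V 0 = ξ - β` and
`V (m+1) (x,t) = ∫₀ᵗ ∫_X K(x,y;t-s) h(y,s) G(V m (y,s) + g(y,s)) dμ ds`,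
every `V m` is measurable, non-negative a.e., and the sequence is
nonincreasing in `m` a.e. -/
theorem iteration_monotone_stochastic
    {X : Type*} [MeasurableSpace X] (μ : Measure X) [SigmaFinite μ]
    (K : X → X → ℝ → ℝ) (g h : X → ℝ → ℝ) (G : ℝ → ℝ)
    (p₁ p₂ : ℝ → ℝ) (β ξ : ℝ)
    (hK_meas : Measurable fun q : X × X × ℝ => K q.1 q.2.1 q.2.2)
    (hK_nonneg : ∀ x y t, 0 ≤ K x y t)
    (hK_stoch : ∀ᵐ x ∂μ, ∀ᵐ t ∂(volume.restrict (Ioi (0:ℝ))),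
      (∫ y, K x y t ∂μ) = 1)
    (hg_meas : Measurable fun q : X × ℝ => g q.1 q.2)
    (hg_nonneg : ∀ x t, 0 ≤ g x t)
    (hg_bdd : MemLp (fun q : X × ℝ => g q.1 q.2) ⊤
      (μ.prod (volume.restrict (Ioi (0:ℝ)))))
    (hβ : β = (eLpNorm (fun q : X × ℝ => g q.1 q.2) ⊤
      (μ.prod (volume.restrict (Ioi (0:ℝ))))).toReal)
    (hh_meas : Measurable fun q : X × ℝ => h q.1 q.2)
    (hh_nonneg : ∀ x t, 0 ≤ h x t)
    (hG_cont : ContinuousOn G (Ici 0))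
    (hG_zero : G 0 = 0)
    (hG_nonneg : ∀ u, 0 ≤ u → 0 ≤ G u)
    (hG_mono : StrictMonoOn G (Ici 0))
    (hG_conc : ConcaveOn ℝ (Ici 0) G)
    (hp₁_cont : ContinuousOn p₁ (Ioi 0)) (hp₂_cont : ContinuousOn p₂ (Ioi 0))
    (hp₁_pos : ∀ t ∈ Ioi (0:ℝ), 0 < p₁ t) (hp₂_pos : ∀ t ∈ Ioi (0:ℝ), 0 < p₂ t)
    (hp_ne : ∃ t ∈ Ioi (0:ℝ), p₁ t ≠ p₂ t)
    (hp₂_int : (∫ t in Ioi (0:ℝ), p₂ t) = 1)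
    (hp_bound : ∀ᵐ x ∂μ, ∀ᵐ t ∂(volume.restrict (Ioi (0:ℝ))),
      p₁ t ≤ h x t ∧ h x t ≤ p₂ t)
    (hξ_pos : 0 < ξ) (hξ_eq : ξ - G ξ = β)
    (V : ℕ → X → ℝ → ℝ)
    (hV0 : ∀ x t, V 0 x t = ξ - β)
    (hVsucc : ∀ m x t, V (m + 1) x t =
      ∫ s in Ioc (0:ℝ) t, ∫ y, K x y (t - s) * (h y s * G (V m y s + g y s)) ∂μ) :
    (∀ m, Measurable fun q : X × ℝ => V m q.1 q.2) ∧
    (∀ m, ∀ᵐ q ∂(μ.prod (volume.restrict (Ioi (0:ℝ)))), 0 ≤ V m q.1 q.2) ∧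
    (∀ m, ∀ᵐ q ∂(μ.prod (volume.restrict (Ioi (0:ℝ)))),
      V (m + 1) q.1 q.2 ≤ V m q.1 q.2) :=
  iteration_monotone_stochastic_general μ K g h G p₁ p₂ β ξ hK_meas hK_nonneg hK_stoch hg_meas
    hg_nonneg hg_bdd hβ hh_meas hh_nonneg hG_nonneg hG_mono hp₂_pos hp₂_int hp_bound hξ_pos hξ_eq V
    hV0 hVsucc
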